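/- arXiv:math/0108169 — 6 statements merged into one kernel-verified Lean document; each statement's English description precedes it below -/
import Mathlib

section
/- For the lattice G = {(p₁ + q₁ k, p₂ + q₂ m) : k, m ∈ ℤ} with q₁, q₂ > 0, the explicit error bound |N(G,T) − (π/(q₁q₂))T²| ≤ (π/(q₁q₂))(2T√(q₁²+q₂²) + q₁² + q₂²) + C holds in the case p₁ = p₂ = 0 (where one may take C = 0), for all T > 0. -/
/-!
Send every point `x + y i` of the plane to the lattice point `q₁⌊x/q₁⌋ + q₂⌊y/q₂⌋ i` below and
to the left of it. The fibres of this map are half-open rectangles of area `q₁q₂` and diameter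
`d = √(q₁² + q₂²)`, and they tile the plane. The fibres over the lattice points of the disc of
radius `T` therefore cover the disc of radius `T - d` and lie in the disc of radius `T + d`, so
`π(T - d)² ≤ N q₁q₂ ≤ π(T + d)²`.
-/

/-- Number of points of the lattice `q₁ℤ × q₂ℤ` in the closed disc of radius `T`. -/
noncomputable def latticeCount0 (q₁ q₂ : ℝ) (T : ℝ) : ℕ :=
  Nat.card {v : ℤ × ℤ // (q₁ * v.1) ^ 2 + (q₂ * v.2) ^ 2 ≤ T ^ 2}

open Real MeasureTheory Metric Set
open scoped ENNReal

section Tiling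

variable {E ι : Type*} [MeasurableSpace E] {μ : Measure E} [Countable ι] {f : E → ι} {a : ℝ≥0∞}

theorem measure_preimage_eq_encard_mul (hmeas : ∀ v, MeasurableSet (f ⁻¹' {v}))
    (hfib : ∀ v, μ (f ⁻¹' {v}) = a) (S : Set ι) : μ (f ⁻¹' S) = S.encard * a := by
  rw [← tsum_measure_preimage_singleton S.to_countable fun v _ ↦ hmeas v]
  simp only [hfib, ENNReal.tsum_set_const]

variable [PseudoMetricSpace E] {p : ι → E} {d : ℝ}

theorem encard_mul_le_measure_closedBall (hmeas : ∀ v, MeasurableSet (f ⁻¹' {v}))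
    (hfib : ∀ v, μ (f ⁻¹' {v}) = a) (hdist : ∀ x, dist x (p (f x)) ≤ d) (c : E) (T : ℝ) :
    {v | p v ∈ closedBall c T}.encard * a ≤ μ (closedBall c (T + d)) := by
  rw [← measure_preimage_eq_encard_mul hmeas hfib]
  refine measure_mono fun x (hx : dist (p (f x)) c ≤ T) ↦ ?_
  rw [mem_closedBall]
  linarith [dist_triangle x (p (f x)) c, hdist x]

theorem measure_closedBall_le_encard_mul (hmeas : ∀ v, MeasurableSet (f ⁻¹' {v}))
    (hfib : ∀ v, μ (f ⁻¹' {v}) = a) (hdist : ∀ x, dist x (p (f x)) ≤ d) (c : E) (T : ℝ) :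
    μ (closedBall c (T - d)) ≤ {v | p v ∈ closedBall c T}.encard * a := by
  rw [← measure_preimage_eq_encard_mul hmeas hfib]
  refine measure_mono fun x hx ↦ ?_
  rw [mem_closedBall] at hx
  show dist (p (f x)) c ≤ T
  linarith [dist_triangle (p (f x)) x c, dist_comm x (p (f x)), hdist x]

theorem finite_setOf_mem_closedBall (hmeas : ∀ v, MeasurableSet (f ⁻¹' {v}))
    (hfib : ∀ v, μ (f ⁻¹' {v}) = a) (hdist : ∀ x, dist x (p (f x)) ≤ d) (ha : a ≠ 0) (c : E)
    (T : ℝ) (hμ : μ (closedBall c (T + d)) ≠ ∞) : {v | p v ∈ closedBall c T}.Finite := by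
  rw [← Set.encard_ne_top_iff]
  intro htop
  have := encard_mul_le_measure_closedBall hmeas hfib hdist c T
  rw [htop, ENat.toENNReal_top, ENNReal.top_mul ha, top_le_iff] at this
  exact hμ this

end Tiling

theorem Complex.volume_closedBall_eq_ofReal (c : ℂ) {r : ℝ} (hr : 0 ≤ r) :
    volume (closedBall c r) = ENNReal.ofReal (π * r ^ 2) := by
  rw [Complex.volume_closedBall, ← ENNReal.ofReal_pow hr, ← NNReal.coe_real_pi,
    ← ENNReal.ofReal_coe_nnreal, ← ENNReal.ofReal_mul' NNReal.pi.coe_nonneg, mul_comm]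

namespace RectLattice

variable {q₁ q₂ : ℝ}

def point (q₁ q₂ : ℝ) (v : ℤ × ℤ) : ℂ := ⟨q₁ * v.1, q₂ * v.2⟩

noncomputable def floor (q₁ q₂ : ℝ) (z : ℂ) : ℤ × ℤ := (⌊z.re / q₁⌋, ⌊z.im / q₂⌋)

theorem preimage_floor_singleton (hq₁ : 0 < q₁) (hq₂ : 0 < q₂) (v : ℤ × ℤ) :
    floor q₁ q₂ ⁻¹' {v} = Complex.measurableEquivRealProd ⁻¹'
      (Ico (q₁ * v.1) (q₁ * v.1 + q₁) ×ˢ Ico (q₂ * v.2) (q₂ * v.2 + q₂)) := by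
  ext z
  simp only [floor, mem_preimage, mem_singleton_iff, Prod.ext_iff, Int.floor_eq_iff,
    le_div_iff₀ hq₁, le_div_iff₀ hq₂, div_lt_iff₀ hq₁, div_lt_iff₀ hq₂,
    Complex.measurableEquivRealProd_apply, mem_prod, mem_Ico, add_mul, one_mul, mul_comm q₁,
    mul_comm q₂]

theorem measurableSet_preimage_floor_singleton (hq₁ : 0 < q₁) (hq₂ : 0 < q₂) (v : ℤ × ℤ) :
    MeasurableSet (floor q₁ q₂ ⁻¹' {v}) := by
  rw [preimage_floor_singleton hq₁ hq₂]
  exact Complex.measurableEquivRealProd.measurable (measurableSet_Ico.prod measurableSet_Ico)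

theorem volume_preimage_floor_singleton (hq₁ : 0 < q₁) (hq₂ : 0 < q₂) (v : ℤ × ℤ) :
    volume (floor q₁ q₂ ⁻¹' {v}) = ENNReal.ofReal (q₁ * q₂) := by
  rw [preimage_floor_singleton hq₁ hq₂,
    Complex.volume_preserving_equiv_real_prod.measure_preimage
      (measurableSet_Ico.prod measurableSet_Ico).nullMeasurableSet,
    Measure.volume_eq_prod, Measure.prod_prod, Real.volume_Ico, Real.volume_Ico,
    add_sub_cancel_left, add_sub_cancel_left, ENNReal.ofReal_mul hq₁.le]

theorem dist_point_floor_le (hq₁ : 0 < q₁) (hq₂ : 0 < q₂) (z : ℂ) :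
    dist z (point q₁ q₂ (floor q₁ q₂ z)) ≤ √(q₁ ^ 2 + q₂ ^ 2) := by
  rw [Complex.dist_eq, Complex.norm_eq_sqrt_sq_add_sq]
  refine Real.sqrt_le_sqrt (add_le_add ?_ ?_)
  · have := Int.sub_floor_div_mul_nonneg z.re hq₁
    have := Int.sub_floor_div_mul_lt z.re hq₁
    simp only [point, floor, Complex.sub_re]
    nlinarith
  · have := Int.sub_floor_div_mul_nonneg z.im hq₂
    have := Int.sub_floor_div_mul_lt z.im hq₂
    simp only [point, floor, Complex.sub_im]
    nlinarith

theorem point_mem_closedBall_iff {T : ℝ} (hT : 0 ≤ T) (v : ℤ × ℤ) :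
    point q₁ q₂ v ∈ closedBall 0 T ↔ (q₁ * v.1) ^ 2 + (q₂ * v.2) ^ 2 ≤ T ^ 2 := by
  rw [mem_closedBall_zero_iff, ← sq_le_sq₀ (norm_nonneg _) hT, Complex.sq_norm,
    Complex.normSq_apply, point, sq, sq, sq]

theorem latticeCount0_eq_ncard {T : ℝ} (hT : 0 ≤ T) :
    latticeCount0 q₁ q₂ T = {v | point q₁ q₂ v ∈ closedBall 0 T}.ncard := by
  rw [← Nat.card_coe_set_eq]
  simp only [point_mem_closedBall_iff hT]
  rfl

theorem finite_setOf_point_mem_closedBall (hq₁ : 0 < q₁) (hq₂ : 0 < q₂) (T : ℝ) :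
    {v | point q₁ q₂ v ∈ closedBall 0 T}.Finite :=
  finite_setOf_mem_closedBall (measurableSet_preimage_floor_singleton hq₁ hq₂)
    (volume_preimage_floor_singleton hq₁ hq₂) (dist_point_floor_le hq₁ hq₂)
    (ENNReal.ofReal_pos.2 (mul_pos hq₁ hq₂)).ne' 0 T measure_closedBall_lt_top.ne

theorem encard_mul_ofReal_eq (hq₁ : 0 < q₁) (hq₂ : 0 < q₂) {T : ℝ} (hT : 0 ≤ T) :
    {v | point q₁ q₂ v ∈ closedBall 0 T}.encard * ENNReal.ofReal (q₁ * q₂) =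
      ENNReal.ofReal (latticeCount0 q₁ q₂ T * (q₁ * q₂)) := by
  rw [latticeCount0_eq_ncard hT, ← (finite_setOf_point_mem_closedBall hq₁ hq₂ T).cast_ncard_eq,
    ENat.toENNReal_coe, ENNReal.ofReal_mul (Nat.cast_nonneg _), ENNReal.ofReal_natCast]

theorem latticeCount0_mul_le (hq₁ : 0 < q₁) (hq₂ : 0 < q₂) {T : ℝ} (hT : 0 ≤ T) :
    (latticeCount0 q₁ q₂ T : ℝ) * (q₁ * q₂) ≤ π * (T + √(q₁ ^ 2 + q₂ ^ 2)) ^ 2 := by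
  have := encard_mul_le_measure_closedBall (measurableSet_preimage_floor_singleton hq₁ hq₂)
    (volume_preimage_floor_singleton hq₁ hq₂) (dist_point_floor_le hq₁ hq₂) 0 T
  rw [encard_mul_ofReal_eq hq₁ hq₂ hT, Complex.volume_closedBall_eq_ofReal _ (by positivity)] at this
  exact (ENNReal.ofReal_le_ofReal_iff (by positivity)).1 this

theorem mul_sq_le_latticeCount0_mul (hq₁ : 0 < q₁) (hq₂ : 0 < q₂) {T : ℝ}
    (hT : √(q₁ ^ 2 + q₂ ^ 2) ≤ T) :
    π * (T - √(q₁ ^ 2 + q₂ ^ 2)) ^ 2 ≤ (latticeCount0 q₁ q₂ T : ℝ) * (q₁ * q₂) := by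
  have := measure_closedBall_le_encard_mul (measurableSet_preimage_floor_singleton hq₁ hq₂)
    (volume_preimage_floor_singleton hq₁ hq₂) (dist_point_floor_le hq₁ hq₂) 0 T
  rw [encard_mul_ofReal_eq hq₁ hq₂ ((Real.sqrt_nonneg _).trans hT),
    Complex.volume_closedBall_eq_ofReal _ (sub_nonneg.2 hT)] at this
  exact (ENNReal.ofReal_le_ofReal_iff (by positivity)).1 this

end RectLattice

/-- explicit Gauss error bound for the centered lattice
(`p₁ = p₂ = 0`, so one may take `C = 0`), for all `T > 0`. -/
theorem lattice_count_error_bound (q₁ q₂ : ℝ) (hq₁ : 0 < q₁) (hq₂ : 0 < q₂)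
    (T : ℝ) (hT : 0 < T) :
    |(latticeCount0 q₁ q₂ T : ℝ) - π / (q₁ * q₂) * T ^ 2| ≤
      π / (q₁ * q₂) * (2 * T * Real.sqrt (q₁ ^ 2 + q₂ ^ 2) + q₁ ^ 2 + q₂ ^ 2) := by
  set d := √(q₁ ^ 2 + q₂ ^ 2)
  set N : ℝ := (latticeCount0 q₁ q₂ T : ℝ)
  have hd2 : q₁ ^ 2 + q₂ ^ 2 = d ^ 2 := (Real.sq_sqrt (by positivity)).symm
  have hq : 0 < q₁ * q₂ := mul_pos hq₁ hq₂
  have hupper : N * (q₁ * q₂) - π * T ^ 2 ≤ π * (2 * T * d + d ^ 2) := by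
    nlinarith [RectLattice.latticeCount0_mul_le hq₁ hq₂ hT.le]
  have hlower : π * T ^ 2 - N * (q₁ * q₂) ≤ π * (2 * T * d + d ^ 2) := by
    rcases le_total d T with hdT | hTd
    · nlinarith [RectLattice.mul_sq_le_latticeCount0_mul hq₁ hq₂ hdT, pi_pos, sq_nonneg d]
    · nlinarith [pi_pos, mul_le_mul_of_nonneg_left hTd hT.le, (by positivity : 0 ≤ N * (q₁ * q₂))]
  rw [add_assoc, hd2, show N - π / (q₁ * q₂) * T ^ 2 = (N * (q₁ * q₂) - π * T ^ 2) / (q₁ * q₂) by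
    field_simp, abs_div, abs_of_pos hq, div_le_iff₀ hq, div_mul_eq_mul_div, div_mul_cancel₀ _ hq.ne']
  exact abs_sub_le_iff.2 ⟨hupper, hlower⟩
end

section
/- For every positive integer n, the point distribution G_{I^n} = ⋃_{k ∈ I^n} {(nℤ + k) × nℤ} is complete with respect to ℤ²: every visible point of ℤ² that has a nonzero scalar multiple lying in G_{I^n} is itself a visible point of G_{I^n}, and moreover every visible point of G_{I^n} is visible in ℤ². -/
open Filter Real Topology

/-- A point `p` of a point distribution `G ⊆ ℤ²` is *visible* if no point `q ∈ G`
satisfies `q = λ • p` (in `ℝ²`) with `0 < |λ| < 1`. -/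
def VisiblePt (G : Set (ℤ × ℤ)) (p : ℤ × ℤ) : Prop :=
  p ∈ G ∧ ¬∃ q ∈ G, ∃ r : ℝ, 0 < |r| ∧ |r| < 1 ∧
    ((q.1 : ℝ), (q.2 : ℝ)) = (r * p.1, r * p.2)

/-- `N(S,T)`: number of points of `S ⊆ ℤ² ⊆ ℝ²` in the closed disc of radius `T`
around the origin. -/
noncomputable def countIn (S : Set (ℤ × ℤ)) (T : ℝ) : ℕ :=
  Nat.card {v : ℤ × ℤ // v ∈ S ∧ (v.1 : ℝ) ^ 2 + (v.2 : ℝ) ^ 2 ≤ T ^ 2}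

/-- The point distribution `G_{I^n} = ⋃_{k ∈ I^n} ((nℤ + k) × nℤ)` where
`I^n = {k ∈ {1,…,n−1} : gcd(k,n) = 1}`. -/
def GIn (n : ℕ) : Set (ℤ × ℤ) :=
  {v | ∃ k : ℕ, 1 ≤ k ∧ k < n ∧ Nat.gcd k n = 1 ∧
    (n : ℤ) ∣ (v.1 - k) ∧ (n : ℤ) ∣ v.2}

/-!
A real multiple of a primitive point of `ℤ²` that lies in `ℤ²` is an integer multiple of
it, so a primitive point is visible in any set containing it. Conversely, a set `G` from
which integer factors can be removed (`m • q ∈ G → q ∈ G`) has no visible non-primitive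
point `g • q`, since `q ∈ G` is a shorter multiple. Hence the visible points of such a `G`
are its primitive points. `G_{I^n}` is such a set, being the set of `v` with
`gcd(v₁, n) = 1` and `n ∣ v₂`, and both sides of the theorem are its primitive points.
-/

section Visibility

variable {G : Set (ℤ × ℤ)} {p q : ℤ × ℤ}

lemma exists_int_eq_of_isCoprime_of_real_mul (hp : IsCoprime p.1 p.2) {r : ℝ}
    (h : ((q.1 : ℝ), (q.2 : ℝ)) = (r * p.1, r * p.2)) :
    ∃ m : ℤ, (m : ℝ) = r ∧ q = m • p := by
  obtain ⟨a, b, hab⟩ := hp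
  obtain ⟨h1, h2⟩ := Prod.mk.inj h
  have habR : (a : ℝ) * p.1 + b * p.2 = 1 := by exact_mod_cast hab
  have hr : ((a * q.1 + b * q.2 : ℤ) : ℝ) = r := by
    push_cast
    rw [h1, h2]
    linear_combination r * habR
  refine ⟨a * q.1 + b * q.2, hr, Prod.ext ?_ ?_⟩
  · have : (q.1 : ℝ) = ((a * q.1 + b * q.2 : ℤ) : ℝ) * p.1 := by rw [hr, h1]
    exact_mod_cast this
  · have : (q.2 : ℝ) = ((a * q.1 + b * q.2 : ℤ) : ℝ) * p.2 := by rw [hr, h2]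
    exact_mod_cast this

lemma visiblePt_of_isCoprime (hpG : p ∈ G) (hp : IsCoprime p.1 p.2) : VisiblePt G p := by
  refine ⟨hpG, ?_⟩
  rintro ⟨q, -, r, hr0, hr1, h⟩
  obtain ⟨m, rfl, -⟩ := exists_int_eq_of_isCoprime_of_real_mul hp h
  have : 0 < |m| ∧ |m| < 1 := by exact_mod_cast And.intro hr0 hr1
  omega

lemma not_visiblePt_zero : ¬VisiblePt G 0 :=
  fun ⟨h0, hvis⟩ => hvis ⟨0, h0, 1 / 2, by norm_num, by norm_num, by simp⟩

lemma not_visiblePt_smul {g : ℤ} (hg : 1 < |g|) (hq : q ∈ G) : ¬VisiblePt G (g • q) := by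
  rintro ⟨-, hvis⟩
  have hgR : (1 : ℝ) < |(g : ℝ)| := by exact_mod_cast hg
  have hg0 : (g : ℝ) ≠ 0 := abs_pos.mp (one_pos.trans hgR)
  refine hvis ⟨q, hq, (g : ℝ)⁻¹, abs_pos.mpr (inv_ne_zero hg0), ?_, ?_⟩
  · rw [abs_inv]
    exact inv_lt_one_of_one_lt₀ hgR
  · simp [field]

lemma VisiblePt.isCoprime (hG : ∀ (m : ℤ) (q : ℤ × ℤ), m • q ∈ G → q ∈ G)
    (hvis : VisiblePt G p) : IsCoprime p.1 p.2 := by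
  rw [Int.isCoprime_iff_gcd_eq_one]
  by_contra hg1
  rcases Nat.eq_zero_or_pos (Int.gcd p.1 p.2) with h0 | hpos
  · obtain ⟨h1, h2⟩ := Int.gcd_eq_zero_iff.mp h0
    exact not_visiblePt_zero ((Prod.ext h1 h2 : p = 0) ▸ hvis)
  · obtain ⟨a, b, -, ha, hb⟩ := Int.exists_gcd_one hpos
    set g := Int.gcd p.1 p.2
    have hp : p = (g : ℤ) • (a, b) :=
      Prod.ext (ha.trans (mul_comm _ _)) (hb.trans (mul_comm _ _))
    rw [hp] at hvis
    exact not_visiblePt_smul (by rw [Nat.abs_cast]; omega) (hG _ _ hvis.1) hvis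

theorem setOf_visiblePt_univ_and_real_multiple_mem_eq
    (hG : ∀ (m : ℤ) (q : ℤ × ℤ), m • q ∈ G → q ∈ G) :
    {p : ℤ × ℤ | VisiblePt Set.univ p ∧ ∃ r : ℝ, r ≠ 0 ∧
        ∃ q ∈ G, ((q.1 : ℝ), (q.2 : ℝ)) = (r * p.1, r * p.2)} = {p | VisiblePt G p} := by
  ext p
  constructor
  · rintro ⟨hvis, r, -, q, hq, h⟩
    have hp := hvis.isCoprime fun _ _ _ => trivial
    obtain ⟨m, -, rfl⟩ := exists_int_eq_of_isCoprime_of_real_mul hp h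
    exact visiblePt_of_isCoprime (hG m p hq) hp
  · intro hvis
    exact ⟨visiblePt_of_isCoprime trivial (hvis.isCoprime hG), 1, one_ne_zero, p, hvis.1,
      by simp⟩

end Visibility

lemma mem_GIn_iff {n : ℕ} {v : ℤ × ℤ} :
    v ∈ GIn n ↔ 1 < n ∧ IsCoprime v.1 n ∧ (n : ℤ) ∣ v.2 := by
  constructor
  · rintro ⟨k, hk1, hkn, hk, ⟨t, ht⟩, h2⟩
    have hkcop : IsCoprime (k : ℤ) n := by
      rw [Int.isCoprime_iff_gcd_eq_one, Int.gcd_natCast_natCast]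
      exact hk
    refine ⟨by omega, ?_, h2⟩
    rw [show v.1 = k + n * t by linarith]
    exact hkcop.add_mul_left_left t
  · rintro ⟨hn, hcop, h2⟩
    have hn0 : (0 : ℤ) < n := by omega
    have hk0 : 0 ≤ v.1 % n := Int.emod_nonneg v.1 hn0.ne'
    have hkn : v.1 % n < n := Int.emod_lt_of_pos v.1 hn0
    have hgcd : Int.gcd (v.1 % n) n = 1 := by
      rw [Int.gcd_emod]
      exact Int.isCoprime_iff_gcd_eq_one.mp hcop
    have hk1 : v.1 % n ≠ 0 := by
      intro h
      rw [h, Int.gcd_zero_left, Int.natAbs_natCast] at hgcd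
      omega
    refine ⟨(v.1 % n).toNat, by omega, by omega, ?_, ?_, h2⟩
    · rw [← Int.gcd_natCast_natCast, Int.toNat_of_nonneg hk0, hgcd]
    · rw [Int.toNat_of_nonneg hk0]
      exact Int.dvd_self_sub_of_emod_eq rfl

lemma mem_GIn_of_smul_mem {n : ℕ} {m : ℤ} {q : ℤ × ℤ} (h : m • q ∈ GIn n) :
    q ∈ GIn n := by
  obtain ⟨hn, hcop, hdvd⟩ := mem_GIn_iff.mp h
  simp only [Prod.smul_fst, Prod.smul_snd, smul_eq_mul] at hcop hdvd
  exact mem_GIn_iff.mpr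
    ⟨hn, hcop.of_mul_left_right, hcop.of_mul_left_left.symm.dvd_of_dvd_mul_left hdvd⟩

theorem GIn_complete_general (n : ℕ) :
    {p : ℤ × ℤ | VisiblePt Set.univ p ∧ ∃ r : ℝ, r ≠ 0 ∧
        ∃ q ∈ GIn n, ((q.1 : ℝ), (q.2 : ℝ)) = (r * p.1, r * p.2)} =
      {p : ℤ × ℤ | VisiblePt (GIn n) p} :=
  setOf_visiblePt_univ_and_real_multiple_mem_eq fun _ _ => mem_GIn_of_smul_mem

/-- `G_{I^n}` is complete with respect to `ℤ²`: the visible points of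
`ℤ²` having a nonzero (real) scalar multiple in `G_{I^n}` are exactly the visible
points of `G_{I^n}`. -/
theorem GIn_complete (n : ℕ) (hn : 0 < n) :
    {p : ℤ × ℤ | VisiblePt Set.univ p ∧ ∃ r : ℝ, r ≠ 0 ∧
        ∃ q ∈ GIn n, ((q.1 : ℝ), (q.2 : ℝ)) = (r * p.1, r * p.2)} =
      {p : ℤ × ℤ | VisiblePt (GIn n) p} :=
  GIn_complete_general n
end

section
/- Fix an integer n > 2 and let x = (p₁/n, p₂/n) with gcd(p₁, p₂, n) = 1. The group V = { ±A : A ∈ SL₂(ℤ), A·(p₁, p₂) ≡ (p₁, p₂) (mod n) } is a subgroup of SL₂(ℤ) of index (n²/2) ∏_{p | n prime}(1 − 1/p²). -/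
/-!
`SL(2, ℤ)` acts on `(ℤ/n)²` through reduction mod `n`, and `V` is the stabiliser of `±v`,
where `v = (p₁, p₂) mod n` is unimodular. The action is transitive on unimodular pairs: such a
pair lifts to a coprime pair of integers, which is the first column of a matrix in `SL(2, ℤ)`.
So the stabiliser of `v` has index the number of unimodular pairs mod `n`, which is
multiplicative in `n` by the Chinese remainder theorem and equals `p^(2k) - p^(2k-2)` for
`n = p^k` (the pairs not both divisible by `p`). Since `n > 2`, `v ≠ -v`, and `-1` exchanges
them, so `V` contains the stabiliser of `v` with index `2`.
-/

open Matrix MatrixGroups MulAction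

def unimodularPairs (R : Type*) [CommRing R] : Set (Fin 2 → R) := {w | IsCoprime (w 0) (w 1)}

theorem ne_neg_of_mem_unimodularPairs {R : Type*} [CommRing R] {w : Fin 2 → R}
    (hw : w ∈ unimodularPairs R) (h2 : (2 : R) ≠ 0) : w ≠ -w := by
  intro h
  obtain ⟨x, y, hxy⟩ := hw
  have h0 : w 0 = -w 0 := congrFun h 0
  have h1 : w 1 = -w 1 := congrFun h 1
  exact h2 (by linear_combination (-2) * hxy + x * h0 + y * h1)

theorem ZMod.intCast_mem_unimodularPairs {n : ℕ} {a b : ℤ} (h : Int.gcd (Int.gcd a b) n = 1) :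
    (Int.cast ∘ ![a, b] : Fin 2 → ZMod n) ∈ unimodularPairs (ZMod n) := by
  have hg : IsUnit ((Int.gcd a b : ℤ) : ZMod n) := by
    simpa [isCoprime_zero_right] using
      (Int.isCoprime_iff_gcd_eq_one.mpr h).map (Int.castRingHom (ZMod n))
  obtain ⟨u, hu⟩ := hg
  refine ⟨Int.gcdA a b * ↑u⁻¹, Int.gcdB a b * ↑u⁻¹, ?_⟩
  simp only [Function.comp_apply, Matrix.cons_val_zero, Matrix.cons_val_one]
  rw [← u.mul_inv, hu, Int.gcd_eq_gcd_ab a b]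
  push_cast
  ring

section Counting

variable {R S : Type*} [CommRing R] [CommRing S]

theorem Prod.isCoprime_iff {x y : R × S} :
    IsCoprime x y ↔ IsCoprime x.1 y.1 ∧ IsCoprime x.2 y.2 := by
  refine ⟨fun h => ⟨h.map (RingHom.fst R S), h.map (RingHom.snd R S)⟩, ?_⟩
  rintro ⟨⟨a, b, hab⟩, ⟨c, d, hcd⟩⟩
  exact ⟨(a, c), (b, d), Prod.ext hab hcd⟩

theorem ncard_unimodularPairs_congr (e : R ≃+* S) :
    (unimodularPairs R).ncard = (unimodularPairs S).ncard :=
  Nat.card_congr <| ((Equiv.refl (Fin 2)).arrowCongr e.toEquiv).subtypeEquiv fun w =>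
    ⟨fun h => h.map e.toRingHom,
      fun h => (by simpa using h.map e.symm.toRingHom : IsCoprime (w 0) (w 1))⟩

theorem ncard_unimodularPairs_prod :
    (unimodularPairs (R × S)).ncard = (unimodularPairs R).ncard * (unimodularPairs S).ncard := by
  rw [← Nat.card_coe_set_eq, ← Nat.card_coe_set_eq, ← Nat.card_coe_set_eq, ← Nat.card_prod]
  exact Nat.card_congr <|
    ((Equiv.arrowProdEquivProdArrow _ _ _).subtypeEquiv fun _ => Prod.isCoprime_iff).trans
      (Equiv.subtypeProdEquivProd (p := (· ∈ unimodularPairs R))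
        (q := (· ∈ unimodularPairs S)))

end Counting

section PrimePower

variable {p k : ℕ} [Fact p.Prime]

local notation "π" => ZMod.castHom (dvd_pow_self p (Nat.add_one_ne_zero k)) (ZMod p)

theorem ZMod.isUnit_iff_castHom_ne_zero (x : ZMod (p ^ (k + 1))) : IsUnit x ↔ π x ≠ 0 := by
  rw [← ZMod.natCast_zmod_val x, map_natCast,
    ZMod.isUnit_natCast_iff_not_dvd_pow Fact.out k.succ_pos, Ne, ZMod.natCast_eq_zero_iff]

theorem ZMod.isCoprime_iff_castHom (x y : ZMod (p ^ (k + 1))) :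
    IsCoprime x y ↔ ¬ ∀ i : Fin 2, π (![x, y] i) = 0 := by
  rw [Fin.forall_fin_two, not_and_or]
  refine ⟨fun h => Semifield.isCoprime_iff.mp (h.map π), ?_⟩
  rintro (hx | hy)
  · obtain ⟨u, rfl⟩ := (ZMod.isUnit_iff_castHom_ne_zero x).mpr hx
    exact ⟨↑u⁻¹, 0, by simp⟩
  · obtain ⟨u, rfl⟩ := (ZMod.isUnit_iff_castHom_ne_zero y).mpr hy
    exact ⟨0, ↑u⁻¹, by simp⟩

theorem ZMod.card_ker_castHom_prime_pow :
    Nat.card (π : ZMod (p ^ (k + 1)) →+ ZMod p).ker = p ^ k := by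
  have hrange : (π : ZMod (p ^ (k + 1)) →+ ZMod p).range = ⊤ :=
    AddMonoidHom.range_eq_top.mpr <|
      ZMod.castHom_surjective (dvd_pow_self p (Nat.add_one_ne_zero k))
  have := (π : ZMod (p ^ (k + 1)) →+ ZMod p).ker.card_mul_index
  rw [AddSubgroup.index_ker, hrange, AddSubgroup.card_top, Nat.card_zmod, Nat.card_zmod] at this
  exact Nat.eq_of_mul_eq_mul_right (Fact.out : p.Prime).pos (this.trans (pow_succ p k))

theorem ncard_unimodularPairs_zmod_prime_pow :
    (unimodularPairs (ZMod (p ^ (k + 1)))).ncard = p ^ (2 * k + 2) - p ^ (2 * k) := by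
  set K := (π : ZMod (p ^ (k + 1)) →+ ZMod p).ker
  have hK : unimodularPairs (ZMod (p ^ (k + 1))) = (Set.univ.pi fun _ => (K : Set _))ᶜ := by
    ext w
    simp [unimodularPairs, ZMod.isCoprime_iff_castHom, K]
  rw [hK, Set.ncard_compl, ← Nat.card_coe_set_eq, Nat.card_congr (Equiv.Set.univPi _),
    Nat.card_fun, Nat.card_fun, Nat.card_zmod, SetLike.coe_sort_coe,
    ZMod.card_ker_castHom_prime_pow, Nat.card_fin]
  ring_nf

end PrimePower

theorem ncard_unimodularPairs_zmod {n : ℕ} (hn : n ≠ 0) :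
    ((unimodularPairs (ZMod n)).ncard : ℝ) =
      n ^ 2 * ∏ p ∈ n.primeFactors, (1 - 1 / (p : ℝ) ^ 2) := by
  induction n using Nat.recOnPosPrimePosCoprime with
  | zero => exact absurd rfl hn
  | one =>
    have : unimodularPairs (ZMod 1) = Set.univ :=
      Set.eq_univ_of_forall fun _ => ⟨0, 0, Subsingleton.elim _ _⟩
    simp [this]
  | prime_pow p m hp hm =>
    obtain ⟨k, rfl⟩ := Nat.exists_eq_add_one_of_ne_zero hm.ne'
    have : Fact p.Prime := ⟨hp⟩
    have hp0 : (p : ℝ) ≠ 0 := Nat.cast_ne_zero.mpr hp.ne_zero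
    rw [ncard_unimodularPairs_zmod_prime_pow, Nat.primeFactors_prime_pow k.add_one_ne_zero hp,
      Finset.prod_singleton, Nat.cast_sub (Nat.pow_le_pow_right hp.pos (by omega))]
    push_cast
    field_simp
    ring
  | coprime a b ha hb hab iha ihb =>
    rw [ncard_unimodularPairs_congr (ZMod.chineseRemainder hab), ncard_unimodularPairs_prod,
      hab.primeFactors_mul, Finset.prod_union hab.disjoint_primeFactors, Nat.cast_mul,
      iha (by omega), ihb (by omega)]
    push_cast
    ring

theorem Int.exists_isCoprime_add_mul {n : ℕ} {a b : ℤ} (ha : a ≠ 0)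
    (h : IsCoprime (a : ZMod n) (b : ZMod n)) : ∃ k : ℤ, IsCoprime a (b + k * n) := by
  -- `m` collects the primes of `a` not dividing `n`; we make `b + k * n ≡ 1 [ZMOD m]`, and a
  -- common prime of `a` and `b + k * n` dividing `n` would contradict `h`.
  set m := ∏ q ∈ a.natAbs.primeFactors with ¬ q ∣ n, q
  have hmn : IsCoprime (m : ℤ) n := Nat.isCoprime_iff_coprime.mpr <| Nat.Coprime.prod_left
    fun q hq => (Nat.Prime.coprime_iff_not_dvd
      (Nat.prime_of_mem_primeFactors (Finset.mem_filter.mp hq).1)).mpr (Finset.mem_filter.mp hq).2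
  obtain ⟨x, y, hxy⟩ := hmn
  refine ⟨y * (1 - b),
    Int.isCoprime_iff_gcd_eq_one.mpr <| Nat.coprime_of_dvd fun q hq hqa hqc => ?_⟩
  rw [← Int.natCast_dvd] at hqa hqc
  by_cases hqn : q ∣ n
  · have : Fact (1 < q) := ⟨hq.one_lt⟩
    have hqb : (q : ℤ) ∣ b := by
      simpa using hqc.sub ((Int.natCast_dvd_natCast.mpr hqn).mul_left (y * (1 - b)))
    have := h.map (ZMod.castHom hqn (ZMod q))
    simp only [ZMod.castHom_apply, ZMod.cast_intCast hqn,
      (ZMod.intCast_zmod_eq_zero_iff_dvd _ _).mpr hqa,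
      (ZMod.intCast_zmod_eq_zero_iff_dvd _ _).mpr hqb, isCoprime_zero_left] at this
    exact not_isUnit_zero this
  · have hqa' : q ∈ a.natAbs.primeFactors :=
      Nat.mem_primeFactors.mpr ⟨hq, Int.natCast_dvd.mp hqa, by simpa⟩
    have hqm : (q : ℤ) ∣ m := Int.natCast_dvd_natCast.mpr <|
      Finset.dvd_prod_of_mem _ (Finset.mem_filter.mpr ⟨hqa', hqn⟩)
    have h1 : (q : ℤ) ∣ 1 := by
      have := hqc.sub (hqm.mul_left ((b - 1) * x))
      rwa [show b + y * (1 - b) * n - (b - 1) * x * m = 1 by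
        linear_combination (1 - b) * hxy] at this
    exact hq.one_lt.ne' (Nat.dvd_one.mp (Int.natCast_dvd.mp h1))

section Action

variable {n : ℕ}

instance : DistribMulAction SL(2, ℤ) (Fin 2 → ZMod n) :=
  DistribMulAction.compHom _ (SpecialLinearGroup.map (Int.castRingHom (ZMod n)))

theorem smul_intCast_comp (A : SL(2, ℤ)) (u : Fin 2 → ℤ) :
    A • (Int.cast ∘ u : Fin 2 → ZMod n) = Int.cast ∘ (A.1 *ᵥ u) :=
  funext fun i => (RingHom.map_mulVec (Int.castRingHom (ZMod n)) A.1 u i).symm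

theorem smul_intCast_comp_eq_iff (A : SL(2, ℤ)) (u : Fin 2 → ℤ) :
    A • (Int.cast ∘ u : Fin 2 → ZMod n) = Int.cast ∘ u ↔
      (A.1 *ᵥ u) 0 ≡ u 0 [ZMOD n] ∧ (A.1 *ᵥ u) 1 ≡ u 1 [ZMOD n] := by
  simp only [smul_intCast_comp, funext_iff, Fin.forall_fin_two, Function.comp_apply,
    ZMod.intCast_eq_intCast_iff]

theorem neg_one_smul_eq_neg (w : Fin 2 → ZMod n) : (-1 : SL(2, ℤ)) • w = -w := by
  show (SpecialLinearGroup.map _ (-1)).1 *ᵥ w = -w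
  ext i
  fin_cases i <;> simp

theorem smul_mem_unimodularPairs (A : SL(2, ℤ)) {w : Fin 2 → ZMod n}
    (hw : w ∈ unimodularPairs (ZMod n)) : A • w ∈ unimodularPairs (ZMod n) :=
  hw.mulVecSL (SpecialLinearGroup.map (Int.castRingHom (ZMod n)) A)

theorem exists_lift_of_mem_unimodularPairs [NeZero n] {w : Fin 2 → ZMod n}
    (hw : w ∈ unimodularPairs (ZMod n)) :
    ∃ u : Fin 2 → ℤ, IsCoprime (u 0) (u 1) ∧ Int.cast ∘ u = w := by
  set a : ℤ := (w 0).val + n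
  have ha : (a : ZMod n) = w 0 := by simp [a]
  have hb : (((w 1).val : ℤ) : ZMod n) = w 1 := by simp
  obtain ⟨k, hk⟩ := Int.exists_isCoprime_add_mul (n := n) (a := a) (b := (w 1).val)
    (by have := NeZero.pos n; omega) (by rwa [ha, hb])
  refine ⟨![a, (w 1).val + k * n], hk, ?_⟩
  ext i
  fin_cases i <;> simp [ha]

theorem exists_smul_eq_of_mem_unimodularPairs [NeZero n] {w : Fin 2 → ZMod n}
    (hw : w ∈ unimodularPairs (ZMod n)) :
    ∃ A : SL(2, ℤ), A • (Int.cast ∘ ![1, 0] : Fin 2 → ZMod n) = w := by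
  obtain ⟨u, hu, rfl⟩ := exists_lift_of_mem_unimodularPairs hw
  obtain ⟨A, hA0, hA1⟩ := hu.exists_SL2_col 0
  refine ⟨A, ?_⟩
  rw [smul_intCast_comp]
  ext i
  fin_cases i <;> simp [hA0, hA1]

theorem orbit_eq_unimodularPairs [NeZero n] {v : Fin 2 → ZMod n}
    (hv : v ∈ unimodularPairs (ZMod n)) :
    orbit SL(2, ℤ) v = unimodularPairs (ZMod n) := by
  refine Set.Subset.antisymm (fun _ ⟨A, hA⟩ => hA ▸ smul_mem_unimodularPairs A hv)
    fun w hw => ?_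
  obtain ⟨A, hA⟩ := exists_smul_eq_of_mem_unimodularPairs hv
  obtain ⟨B, hB⟩ := exists_smul_eq_of_mem_unimodularPairs hw
  refine mem_orbit_iff.mpr ⟨B * A⁻¹, ?_⟩
  rw [mul_smul, inv_smul_eq_iff.mpr hA.symm, hB]

end Action

section SignStabilizer

variable (G : Type*) {α : Type*} [Group G] [AddGroup α] [DistribMulAction G α]

def signStabilizer (v : α) : Subgroup G where
  carrier := {g | g • v = v ∨ g • v = -v}
  one_mem' := Or.inl (one_smul G v)
  mul_mem' := by
    rintro g h (hg | hg) (hh | hh) <;> simp [mul_smul, hg, hh, smul_neg]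
  inv_mem' := by
    rintro g (hg | hg) <;> simp [inv_smul_eq_iff, smul_neg, hg]

variable {G} {v : α}

theorem stabilizer_le_signStabilizer : stabilizer G v ≤ signStabilizer G v :=
  fun _ => Or.inl

theorem mem_signStabilizer_iff_exists {z : G} (hz : z • v = -v) {g : G} :
    g ∈ signStabilizer G v ↔ ∃ a ∈ stabilizer G v, g = a ∨ g = z * a := by
  constructor
  · rintro (hg | hg)
    · exact ⟨g, hg, Or.inl rfl⟩
    · refine ⟨z⁻¹ * g, ?_, Or.inr (mul_inv_cancel_left z g).symm⟩
      rw [mem_stabilizer_iff, mul_smul, hg, inv_smul_eq_iff, hz]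
  · rintro ⟨a, ha, rfl | rfl⟩
    · exact Or.inl ha
    · exact Or.inr (by rw [mul_smul, mem_stabilizer_iff.mp ha, hz])

theorem relIndex_stabilizer_signStabilizer (hv : v ≠ -v) {z : G} (hz : z • v = -v) :
    (stabilizer G v).relIndex (signStabilizer G v) = 2 := by
  refine Subgroup.index_eq_two_iff.mpr ⟨⟨z, Or.inr hz⟩, fun ⟨g, hg⟩ => ?_⟩
  simp only [Subgroup.mem_subgroupOf, Subgroup.coe_mul, mem_stabilizer_iff, mul_smul, hz,
    smul_neg]
  rcases hg with hg | hg <;> simp [hg, hv.symm]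

end SignStabilizer

/-- for `n > 2` and `gcd(p₁,p₂,n) = 1`, the set
`V = {±A : A ∈ SL₂(ℤ), A·(p₁,p₂) ≡ (p₁,p₂) (mod n)}`
(equivalently, matrices `M` with `M·(p₁,p₂) ≡ ±(p₁,p₂) (mod n)`) is a subgroup of
`SL₂(ℤ)` of index `(n²/2) ∏_{p | n prime}(1 − 1/p²)`. -/
theorem veech_group_index (n : ℕ) (hn : 2 < n) (p₁ p₂ : ℤ)
    (h : Int.gcd (Int.gcd p₁ p₂) n = 1) :
    ∃ V : Subgroup (Matrix.SpecialLinearGroup (Fin 2) ℤ),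
      (↑V : Set (Matrix.SpecialLinearGroup (Fin 2) ℤ)) =
        {M | ∃ A : Matrix.SpecialLinearGroup (Fin 2) ℤ,
          (A.1.mulVec ![p₁, p₂]) 0 ≡ p₁ [ZMOD n] ∧
          (A.1.mulVec ![p₁, p₂]) 1 ≡ p₂ [ZMOD n] ∧ (M = A ∨ M = -A)} ∧
      (V.index : ℝ) = (n : ℝ) ^ 2 / 2 * ∏ p ∈ n.primeFactors, (1 - 1 / (p : ℝ) ^ 2) := by
  have : NeZero n := ⟨by omega⟩
  set v : Fin 2 → ZMod n := Int.cast ∘ ![p₁, p₂]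
  have hv : v ∈ unimodularPairs (ZMod n) := ZMod.intCast_mem_unimodularPairs h
  have hz : (-1 : SL(2, ℤ)) • v = -v := neg_one_smul_eq_neg v
  have h2 : (2 : ZMod n) ≠ 0 := by
    rw [← Nat.cast_ofNat, Ne, ZMod.natCast_eq_zero_iff]
    exact fun h2 => absurd (Nat.le_of_dvd two_pos h2) (by omega)
  refine ⟨signStabilizer SL(2, ℤ) v, ?_, ?_⟩
  · ext M
    rw [SetLike.mem_coe, mem_signStabilizer_iff_exists hz]
    simp only [mem_stabilizer_iff, v, smul_intCast_comp_eq_iff, neg_one_mul, and_assoc]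
    rfl
  · have hindex :=
      Subgroup.relIndex_mul_index (stabilizer_le_signStabilizer (G := SL(2, ℤ)) (v := v))
    rw [relIndex_stabilizer_signStabilizer (ne_neg_of_mem_unimodularPairs hv h2) hz,
      index_stabilizer, orbit_eq_unimodularPairs hv] at hindex
    have hcount := ncard_unimodularPairs_zmod (NeZero.ne n)
    rw [← hindex] at hcount
    push_cast at hcount
    linarith
end

section
/- As n → ∞, the quantity ∏_{p | n prime}(1 − 1/p²)^{−1} · Σ_{i ∈ I^n} 1/i² converges to π²/6. -/
open Finset Real Filter Topology

/-!
The coprimality indicator mod `n` is the trivial Dirichlet character mod `n`, whose L-series is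
`ζ(s) ∏_{p ∣ n} (1 - p^{-s})` by the Euler product. At `s = 2` this says that the full series
`∑_{gcd(j,n) = 1} 1/j²` equals `Q_n · π²/6` with `Q_n = ∏_{p ∣ n} (1 - 1/p²)`, so the quantity in
question differs from `π²/6` by `Q_n⁻¹` times the tail `∑_{j ≥ n, gcd(j,n) = 1} 1/j²`. That tail is
at most the tail of `ζ(2)`, and `Q_n⁻¹ ≤ π²/6` because the full series contains the term `1`.
-/

theorem hasSum_ite_coprime_one_div_sq {n : ℕ} (hn : n ≠ 0) :
    HasSum (fun j : ℕ => if j.Coprime n then 1 / (j : ℝ) ^ 2 else 0)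
      ((∏ p ∈ n.primeFactors, (1 - 1 / (p : ℝ) ^ 2)) * (π ^ 2 / 6)) := by
  have : NeZero n := ⟨hn⟩
  have hs : 1 < (2 : ℂ).re := by norm_num
  have hL := DirichletCharacter.LSeries_changeLevel (one_dvd n) (1 : DirichletCharacter ℂ 1) hs
  rw [DirichletCharacter.changeLevel_one, DirichletCharacter.LSeries_modOne_eq,
    LSeries_one_eq_riemannZeta hs, riemannZeta_two] at hL
  have hsum :=
    (DirichletCharacter.LSeriesSummable_of_one_lt_re (1 : DirichletCharacter ℂ n) hs).LSeriesHasSum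
  rw [hL, LSeriesHasSum] at hsum
  rw [← Complex.hasSum_ofReal]
  convert hsum using 1
  · ext j
    rw [LSeries.term_def]
    by_cases hj : j.Coprime n
    · rw [if_pos hj, MulChar.one_apply ((ZMod.isUnit_iff_coprime j n).mpr hj)]
      obtain rfl | hj0 := eq_or_ne j 0 <;> simp [*]
    · rw [if_neg hj, MulChar.map_nonunit _ (mt (ZMod.isUnit_iff_coprime j n).mp hj)]
      simp
  · push_cast
    rw [mul_comm]
    refine congrArg _ (Finset.prod_congr rfl fun p _ => ?_)
    rw [MulChar.one_apply (isUnit_of_subsingleton _), one_mul, Complex.cpow_neg, one_div]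
    norm_cast

theorem abs_sum_range_sub_tsum_le {f g : ℕ → ℝ} (hg : 0 ≤ g) (hgf : g ≤ f) (hf : Summable f)
    (n : ℕ) : |∑ j ∈ range n, g j - ∑' j, g j| ≤ ∑' j, f j - ∑ j ∈ range n, f j := by
  have hgs : Summable g := hf.of_nonneg_of_le hg hgf
  rw [← hgs.sum_add_tsum_nat_add n, ← hf.sum_add_tsum_nat_add n, sub_add_cancel_left,
    add_sub_cancel_left, abs_neg, abs_of_nonneg (tsum_nonneg fun j => hg (j + n))]
  exact Summable.tsum_le_tsum (fun j => hgf _) ((summable_nat_add_iff n).mpr hgs)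
    ((summable_nat_add_iff n).mpr hf)

theorem sum_filter_coprime_Ico_eq_sum_range {M : Type*} [AddCommMonoid M] (n : ℕ) (f : ℕ → M)
    (hf : f 0 = 0) :
    ∑ i ∈ (Ico 1 n).filter (fun i => Nat.gcd i n = 1), f i =
      ∑ j ∈ range n, if j.Coprime n then f j else 0 := by
  rw [sum_filter]
  rcases Nat.eq_zero_or_pos n with rfl | hn
  · simp
  · rw [range_eq_Ico, sum_eq_sum_Ico_succ_bot hn]
    simp [hf, Nat.coprime_iff_gcd_eq_one]

/-- as `n → ∞`,
`∏_{p | n prime}(1 − 1/p²)⁻¹ · ∑_{i ∈ I^n} 1/i² → π²/6`. -/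
theorem In_sum_tendsto :
    Tendsto (fun n : ℕ =>
      (∏ p ∈ n.primeFactors, ((1 : ℝ) - 1 / (p : ℝ) ^ 2)⁻¹) *
        ∑ i ∈ (Finset.Ico 1 n).filter (fun i => Nat.gcd i n = 1), (1 : ℝ) / (i : ℝ) ^ 2)
      atTop (nhds (π ^ 2 / 6)) := by
  have htail : Tendsto (fun n => π ^ 2 / 6 * (π ^ 2 / 6 - ∑ j ∈ range n, 1 / (j : ℝ) ^ 2))
      atTop (𝓝 0) := by
    have := ((tendsto_const_nhds (x := π ^ 2 / 6)).sub hasSum_zeta_two.tendsto_sum_nat).const_mul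
      (π ^ 2 / 6)
    rwa [sub_self, mul_zero] at this
  refine tendsto_sub_nhds_zero_iff.mp (squeeze_zero_norm' ?_ htail)
  filter_upwards [eventually_ne_atTop 0] with n hn
  rw [prod_inv_distrib, sum_filter_coprime_Ico_eq_sum_range n _ (by simp)]
  set Q := ∏ p ∈ n.primeFactors, (1 - 1 / (p : ℝ) ^ 2)
  set g : ℕ → ℝ := fun j => if j.Coprime n then 1 / (j : ℝ) ^ 2 else 0
  have hg : HasSum g (Q * (π ^ 2 / 6)) := hasSum_ite_coprime_one_div_sq hn
  have hg_nonneg : 0 ≤ g := fun j => by positivity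
  have hg_le : g ≤ fun j : ℕ => 1 / (j : ℝ) ^ 2 := fun j => by
    dsimp only [g]; split_ifs; exacts [le_rfl, by positivity]
  have hQ : 1 ≤ Q * (π ^ 2 / 6) := by simpa [g] using le_hasSum hg 1 fun j _ => hg_nonneg j
  have hQ0 : 0 < Q := pos_of_mul_pos_left (one_pos.trans_le hQ) (by positivity)
  have hsplit : Q⁻¹ * ∑ j ∈ range n, g j - π ^ 2 / 6 = Q⁻¹ * (∑ j ∈ range n, g j - ∑' j, g j) := by
    rw [hg.tsum_eq]; field_simp
  rw [Real.norm_eq_abs, hsplit, abs_mul, abs_of_pos (inv_pos.2 hQ0)]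
  gcongr
  · exact (inv_le_iff_one_le_mul₀' hQ0).mpr hQ
  · simpa only [hasSum_zeta_two.tsum_eq] using
      abs_sum_range_sub_tsum_le hg_nonneg hg_le hasSum_zeta_two.summable n
end

section
/- For n coprime to i with 1 ≤ i ≤ n−1, the line segment in ℝ² from (0,0) to (i,n) contains exactly one point of the set (1/n, 0) + ℤ², namely the point (x·i/n, x) where x is the unique element of {1,…,n−1} with x·i ≡ 1 (mod n). -/
/-! Parametrize the segment by `t ∈ (0, 1)`. An integral second coordinate `t * n = a` forces
`t = a / n` with `a < n`; the first coordinate `a * i / n` then lies in `1 / n + ℤ` exactly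
when `a * i ≡ 1 (mod n)`. Inverses modulo `n` are unique, and `a, x < n`, so `a = x`. -/

theorem eq_of_natCast_mul_eq_one {n a b i : ℕ} (ha : a < n) (hb : b < n)
    (ha₁ : (a : ZMod n) * i = 1) (hb₁ : (b : ZMod n) * i = 1) : a = b := by
  have hab : (a : ZMod n) = b :=
    calc (a : ZMod n) = a * (b * i) := by rw [hb₁, mul_one]
      _ = b * (a * i) := by ring
      _ = b := by rw [ha₁, mul_one]
  rwa [ZMod.natCast_eq_natCast_iff', Nat.mod_eq_of_lt ha, Nat.mod_eq_of_lt hb] at hab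

theorem exists_nat_eq_div_of_mul_eq_intCast {n : ℕ} (hn : 0 < n) {t : ℝ} (ht₀ : 0 ≤ t)
    (ht₁ : t < 1) {m : ℤ} (hm : t * n = m) : ∃ a : ℕ, a < n ∧ t = a / n := by
  have hn' : (0 : ℝ) < n := by exact_mod_cast hn
  have hm₀ : (0 : ℝ) ≤ m := hm ▸ by positivity
  lift m to ℕ using by exact_mod_cast hm₀
  refine ⟨m, ?_, by rw [eq_div_iff hn'.ne']; exact_mod_cast hm⟩
  have : (m : ℝ) < n := by push_cast at hm; nlinarith
  exact_mod_cast this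

theorem natCast_mul_eq_one_of_div_mul_eq {n a i : ℕ} (hn : 0 < n) {k : ℤ}
    (h : (a : ℝ) / n * i = 1 / n + k) : (a : ZMod n) * i = 1 := by
  have hn' : (n : ℝ) ≠ 0 := by positivity
  have hℤ : (a * i : ℤ) = 1 + n * k := by
    field_simp at h
    exact_mod_cast h
  simpa using congrArg (Int.cast : ℤ → ZMod n) hℤ

theorem Nat.cast_div_eq_cast_mod_div_add_cast_div {K : Type*} [Field K] [CharZero K] (a n : ℕ) :
    (a : K) / n = (a % n : ℕ) / n + (a / n : ℕ) := by
  rcases n.eq_zero_or_pos with rfl | hn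
  · simp
  have hn' : (n : K) ≠ 0 := by exact_mod_cast hn.ne'
  have hdiv : ((a % n : ℕ) : K) + n * (a / n : ℕ) = a := by exact_mod_cast Nat.mod_add_div a n
  field_simp
  linear_combination -hdiv

theorem unique_lattice_point_on_segment_general (n i : ℕ)
    (x : ℕ) (hx : 1 ≤ x ∧ x ≤ n - 1) (hxi : x * i % n = 1) :
    {p : ℝ × ℝ | (∃ t : ℝ, 0 < t ∧ t < 1 ∧ p = (t * i, t * n)) ∧
        ∃ k m : ℤ, p = (1 / (n : ℝ) + k, (m : ℝ))} =
      {((x * i : ℕ) / (n : ℝ), (x : ℝ))} := by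
  have hn : 0 < n := by omega
  have hxn : x < n := by omega
  ext p
  simp only [Set.mem_ofPred_eq, Set.mem_singleton_iff]
  constructor
  · rintro ⟨⟨t, ht₀, ht₁, rfl⟩, k, m, hp⟩
    obtain ⟨a, han, rfl⟩ :=
      exists_nat_eq_div_of_mul_eq_intCast hn ht₀.le ht₁ (congrArg Prod.snd hp)
    have ha₁ := natCast_mul_eq_one_of_div_mul_eq hn (congrArg Prod.fst hp)
    have hx₁ : (x : ZMod n) * i = 1 := by
      rw [← Nat.cast_mul, ← ZMod.natCast_mod, hxi, Nat.cast_one]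
    obtain rfl := eq_of_natCast_mul_eq_one han hxn ha₁ hx₁
    ext <;> push_cast <;> field_simp
  · rintro rfl
    have hx₀ : (0 : ℝ) < x := by exact_mod_cast hx.1
    refine ⟨⟨x / n, by positivity, ?_, ?_⟩, ((x * i / n : ℕ) : ℤ), x, ?_⟩
    · rw [div_lt_one (by positivity)]
      exact_mod_cast hxn
    · ext <;> push_cast <;> field_simp
    · rw [Nat.cast_div_eq_cast_mod_div_add_cast_div, hxi]
      simp only [Nat.cast_one, Int.cast_natCast]

/-- for `n ≥ 2`, `1 ≤ i ≤ n−1` with `gcd(i,n) = 1`, the open segment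
from `(0,0)` to `(i,n)` meets the set `(1/n, 0) + ℤ²` in exactly one point, namely
`(x·i/n, x)` where `x ∈ {1,…,n−1}` satisfies `x·i ≡ 1 (mod n)`. -/
theorem unique_lattice_point_on_segment (n i : ℕ) (hn : 2 ≤ n)
    (hi : 1 ≤ i ∧ i ≤ n - 1) (hcop : Nat.gcd i n = 1)
    (x : ℕ) (hx : 1 ≤ x ∧ x ≤ n - 1) (hxi : x * i % n = 1) :
    {p : ℝ × ℝ | (∃ t : ℝ, 0 < t ∧ t < 1 ∧ p = (t * i, t * n)) ∧
        ∃ k m : ℤ, p = (1 / (n : ℝ) + k, (m : ℝ))} =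
      {((x * i : ℕ) / (n : ℝ), (x : ℝ))} :=
  unique_lattice_point_on_segment_general n i x hx hxi
end

section
/- Let y ∈ [0,1)² be a point with y ∉ ℚ², and suppose x ∈ [0,1)² and integers m₁, n₁, m₂, n₂, k₁, l₁, k₂, l₂ and rationals p₁/q₁, p₂/q₂ ∈ (0,1) satisfy x + (m₁,n₁) = (p₁/q₁)(y + (k₁,l₁)) and x + (m₂,n₂) = (p₂/q₂)(y + (k₂,l₂)). Then p₁/q₁ = p₂/q₂. -/
/-! Subtracting the two relations eliminates `x`: `(r₁ - r₂) • y` is a rational vector, so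
`r₁ ≠ r₂` would make `y` rational. -/

theorem Rat.exists_cast_eq_of_affine_relations {K : Type*} [Field K] [CharZero K] {a b : K}
    {s₁ s₂ t₁ t₂ r₁ r₂ : ℚ} (hr : r₁ ≠ r₂)
    (h₁ : a + s₁ = r₁ * (b + t₁)) (h₂ : a + s₂ = r₂ * (b + t₂)) :
    ∃ q : ℚ, b = q := by
  have hr' : ((r₁ : K) - r₂) ≠ 0 := sub_ne_zero.mpr (Rat.cast_injective.ne hr)
  refine ⟨(s₁ - s₂ - r₁ * t₁ + r₂ * t₂) / (r₁ - r₂), ?_⟩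
  push_cast
  rw [eq_div_iff hr']
  linear_combination h₂ - h₁

theorem common_stretch_factor_general (y : ℝ × ℝ)
    (hyirr : ¬∃ a b : ℚ, y = ((a : ℝ), (b : ℝ)))
    (x : ℝ × ℝ)
    (m₁ n₁ m₂ n₂ k₁ l₁ k₂ l₂ : ℤ) (r₁ r₂ : ℚ)
    (h₁a : x.1 + m₁ = r₁ * (y.1 + k₁)) (h₁b : x.2 + n₁ = r₁ * (y.2 + l₁))
    (h₂a : x.1 + m₂ = r₂ * (y.1 + k₂)) (h₂b : x.2 + n₂ = r₂ * (y.2 + l₂)) :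
    r₁ = r₂ := by
  by_contra hr
  obtain ⟨a, ha⟩ := Rat.exists_cast_eq_of_affine_relations (s₁ := m₁) (s₂ := m₂) (t₁ := k₁)
    (t₂ := k₂) hr (by exact_mod_cast h₁a) (by exact_mod_cast h₂a)
  obtain ⟨b, hb⟩ := Rat.exists_cast_eq_of_affine_relations (s₁ := n₁) (s₂ := n₂) (t₁ := l₁)
    (t₂ := l₂) hr (by exact_mod_cast h₁b) (by exact_mod_cast h₂b)
  exact hyirr ⟨a, b, Prod.ext ha hb⟩

/-- if `y ∈ [0,1)²` is not rational and two saddle connections to `x`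
rationally divide saddle connections to `y`, i.e.
`x + (m₁,n₁) = (p₁/q₁)(y + (k₁,l₁))` and `x + (m₂,n₂) = (p₂/q₂)(y + (k₂,l₂))` with
stretch factors `r₁ = p₁/q₁, r₂ = p₂/q₂ ∈ (0,1)`, then the stretch factors agree. -/
theorem common_stretch_factor (y : ℝ × ℝ)
    (hy1 : y.1 ∈ Set.Ico (0 : ℝ) 1) (hy2 : y.2 ∈ Set.Ico (0 : ℝ) 1)
    (hyirr : ¬∃ a b : ℚ, y = ((a : ℝ), (b : ℝ)))
    (x : ℝ × ℝ) (hx1 : x.1 ∈ Set.Ico (0 : ℝ) 1) (hx2 : x.2 ∈ Set.Ico (0 : ℝ) 1)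
    (m₁ n₁ m₂ n₂ k₁ l₁ k₂ l₂ : ℤ) (r₁ r₂ : ℚ)
    (hr₁ : 0 < r₁ ∧ r₁ < 1) (hr₂ : 0 < r₂ ∧ r₂ < 1)
    (h₁a : x.1 + m₁ = r₁ * (y.1 + k₁)) (h₁b : x.2 + n₁ = r₁ * (y.2 + l₁))
    (h₂a : x.1 + m₂ = r₂ * (y.1 + k₂)) (h₂b : x.2 + n₂ = r₂ * (y.2 + l₂)) :
    r₁ = r₂ :=
  common_stretch_factor_general y hyirr x m₁ n₁ m₂ n₂ k₁ l₁ k₂ l₂ r₁ r₂ h₁a h₁b h₂a h₂b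
end
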